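/- arXiv:2509.09353 — 2 statements merged into one kernel-verified Lean document; each statement's English description precedes it below -/
import Mathlib

section
/- There exists a universal constant c₀ ≥ 4 such that the following holds in the hidden-subclique model (HS-I) with q = 1/2, assuming (λk/√(q̄n)) ∨ (λ/√q̄) ∨ (k/n) ≤ D^{−8c₀}: let G^{(1)}, G^{(2)} be templates with at most D edges, with connected components G^{(1)}_1,…,G^{(1)}_{cc₁} and G^{(2)}_1,…,G^{(2)}_{cc₂}, let M ∈ 𝓜* be a matching and (π^{(1)},π^{(2)}) ∈ Π(M). Then for all subsets S₁ ⊆ {1,…,cc₁} and S₂ ⊆ {1,…,cc₂}: 0 ≤ E[∏_{i∈{1,…,cc₁}∖S₁} P_{G^{(1)}_i,π^{(1)}}(Y) · ∏_{i∈{1,…,cc₂}∖S₂} P_{G^{(2)}_i,π^{(2)}}(Y)] · E[∏_{i∈S₁} P_{G^{(1)}_i,π^{(1)}}(Y)] · E[∏_{i∈S₂} P_{G^{(2)}_i,π^{(2)}}(Y)] ≤ (k/n)^{(|S₁|+|S₂|)/2} · E[P_{G^{(1)},π^{(1)}}(Y)·P_{G^{(2)},π^{(2)}}(Y)]. -/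
/-!
Under (HS-I) with `q = 1/2`, given the latent labels the centred edge variables are independent
with means `λ 1{z_i ≤ k} 1{z_j ≤ k}`, and `Y_f² = 1/4`. Hence a product of `Y_f` over a set `F` of
distinct labeled edges has mean `λ^|F| (k/n)^|V(F)|`, and all four expectations are explicit
monomials. The comparison is then a count. Edges agree up to the edges shared between the split
parts, each of which trades `λ² ≤ 1/4` for `1/4`. For nodes, every split-off component contains a
matched node, whose label is counted twice on the split side but once in the merged graph; this
produces the factor `(k/n)^((|S₁| + |S₂|)/2)`.
-/

open Finset MeasureTheory
open scoped Classical

noncomputable section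

namespace LDLB

abbrev Idx (n : ℕ) := {p : Fin n × Fin n // p.1 < p.2}
abbrev Obs (n : ℕ) := Idx n → ℝ

def edgeVal {n : ℕ} (Y : Obs n) (i j : Fin n) : ℝ :=
  if h : i = j then 0 else Y ⟨(min i j, max i j), min_lt_max.mpr h⟩

lemma edgeVal_symm {n : ℕ} (Y : Obs n) (i j : Fin n) : edgeVal Y i j = edgeVal Y j i := by
  by_cases h : i = j
  · subst h; rfl
  · have h' : ¬ j = i := fun hji => h hji.symm
    unfold edgeVal
    rw [dif_neg h, dif_neg h']
    congr 1
    refine Subtype.ext ?_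
    simp only []
    rw [min_comm i j, max_comm i j]

def edgeValSym {n : ℕ} (Y : Obs n) : Sym2 (Fin n) → ℝ :=
  Sym2.lift ⟨fun i j => edgeVal Y i j, fun i j => edgeVal_symm Y i j⟩

def monoE {n m : ℕ} (Ed : Finset (Sym2 (Fin m))) (π : Fin m → Fin n) : Obs n → ℝ :=
  fun Y => ∏ e ∈ Ed, edgeValSym Y (e.map π)

structure Graf where
  m : ℕ
  Ed : Finset (Sym2 (Fin m))
  not_diag : ∀ e ∈ Ed, ¬ e.IsDiag

def Graf.graph (G : Graf) : SimpleGraph (Fin G.m) where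
  Adj u v := u ≠ v ∧ s(u, v) ∈ G.Ed
  symm := by
    constructor
    intro u v h
    exact ⟨h.1.symm, by rw [Sym2.eq_swap]; exact h.2⟩
  loopless := by constructor; intro v h; exact h.1 rfl

def Graf.IsTemplate (G : Graf) : Prop := ∀ v : Fin G.m, ∃ e ∈ G.Ed, v ∈ e

def Graf.compOf (G : Graf) (v : Fin G.m) : Finset (Sym2 (Fin G.m)) :=
  G.Ed.filter (fun e => ∀ w ∈ e, G.graph.Reachable v w)

def Graf.comps (G : Graf) : Finset (Finset (Sym2 (Fin G.m))) :=
  (Finset.univ.image G.compOf).filter (fun C => C.Nonempty)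

def Graf.ccCount (G : Graf) : ℕ :=
  (Finset.univ.image (fun v => G.graph.connectedComponentMk v)).card

def Graf.autCard (G : Graf) : ℕ :=
  (Finset.univ.filter (fun σ : Equiv.Perm (Fin G.m) =>
    ∀ e : Sym2 (Fin G.m), e.map σ ∈ G.Ed ↔ e ∈ G.Ed)).card

def Graf.Iso (G₁ G₂ : Graf) : Prop :=
  ∃ σ : Fin G₁.m ≃ Fin G₂.m, ∀ e : Sym2 (Fin G₁.m), e.map σ ∈ G₂.Ed ↔ e ∈ G₁.Ed

structure IsFamily (D : ℕ) (𝒢 : Finset Graf) : Prop where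
  templ : ∀ G ∈ 𝒢, G.IsTemplate
  edges_lb : ∀ G ∈ 𝒢, 1 ≤ G.Ed.card
  edges_ub : ∀ G ∈ 𝒢, G.Ed.card ≤ D
  pairwise_noniso : ∀ G₁ ∈ 𝒢, ∀ G₂ ∈ 𝒢, G₁ ≠ G₂ → ¬ G₁.Iso G₂
  maximal : ∀ G : Graf, G.IsTemplate → 1 ≤ G.Ed.card → G.Ed.card ≤ D →
    ∃ G' ∈ 𝒢, G.Iso G'

structure Model (n : ℕ) where
  q : ℝ
  Θ : Fin n → Fin n → ℝ
  wz : (Fin n → Fin n) → ℝ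

def Model.qbar {n : ℕ} (M : Model n) : ℝ := M.q * (1 - M.q)

def bern (p : ℝ) (b : Bool) : ℝ := if b then p else 1 - p

def obsIdx {n : ℕ} (q : ℝ) (y : Fin n → Fin n → Bool) : Obs n :=
  fun p => (if y p.1.1 p.1.2 then (1 : ℝ) else 0) - q

def wObsA {n : ℕ} (q : ℝ) (A : Fin n → Fin n → ℝ) (y : Fin n → Fin n → Bool) : ℝ :=
  ∏ i : Fin n, ∏ j : Fin n, if i < j then bern (q + A i j) (y i j) else (1 / 2 : ℝ)

def wObs {n : ℕ} (q : ℝ) (Θ : Fin n → Fin n → ℝ) (z : Fin n → Fin n) :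
    (Fin n → Fin n → Bool) → ℝ :=
  wObsA q (fun i j => Θ (z i) (z j))

def Model.EOm {n : ℕ} (M : Model n) (f : (Fin n → Fin n) → (Fin n → Fin n → Bool) → ℝ) : ℝ :=
  ∑ z : Fin n → Fin n, ∑ y : Fin n → Fin n → Bool,
    M.wz z * wObs M.q M.Θ z y * f z y

def Model.E {n : ℕ} (M : Model n) (f : Obs n → ℝ) : ℝ :=
  M.EOm (fun _ y => f (obsIdx M.q y))

def wIndep (n : ℕ) : (Fin n → Fin n) → ℝ := fun _ => ((n : ℝ) ^ n)⁻¹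

def wPerm (n : ℕ) : (Fin n → Fin n) → ℝ :=
  fun z => if Function.Bijective z then ((n.factorial : ℝ))⁻¹ else 0

def injs (m n : ℕ) : Finset (Fin m → Fin n) :=
  Finset.univ.filter (fun π => Function.Injective π)

def cmono {n : ℕ} (M : Model n) (G : Graf) (π : Fin G.m → Fin n) (Y : Obs n) : ℝ :=
  ∏ C ∈ G.comps, (monoE C π Y - M.E (monoE C π))

def Pbar {n : ℕ} (M : Model n) (G : Graf) (Y : Obs n) : ℝ :=
  ∑ π ∈ injs G.m n, cmono M G π Y

def Vproxy {n : ℕ} (M : Model n) (G : Graf) : ℝ :=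
  (n.descFactorial G.m : ℝ) * (G.autCard : ℝ) * M.qbar ^ G.Ed.card

def Psi {n : ℕ} (M : Model n) (G : Graf) (Y : Obs n) : ℝ :=
  Pbar M G Y / Real.sqrt (Vproxy M G)

/-! ### Parameters, the six models -/

/-- Base constraints on the parameters. -/
def Params (n k : ℕ) (q lam : ℝ) : Prop :=
  2 ≤ n ∧ 1 ≤ k ∧ k ≤ n ∧ 0 < q ∧ q ≤ 1 / 2 ∧ 0 ≤ lam ∧ lam ≤ 1 - q

/-- The signal size `(k/n) ∨ (λ k / √(n q)) ∨ (λ/q)`. -/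
def signal (n k : ℕ) (q lam : ℝ) : ℝ :=
  max (max ((k : ℝ) / n) (lam * k / Real.sqrt (n * q))) (lam / q)

/-- Hidden subclique signal matrix. -/
def thetaHS (n k : ℕ) (lam : ℝ) : Fin n → Fin n → ℝ :=
  fun i j => if i.val < k ∧ j.val < k then lam else 0

/-- Stochastic block model signal matrix (blocks of size `k`). -/
def thetaSBM (n k : ℕ) (lam : ℝ) : Fin n → Fin n → ℝ :=
  fun i j => if i.val / k = j.val / k then lam else 0

/-- Toeplitz seriation signal matrix (bandwidth `k/2`). -/
def thetaTS (n k : ℕ) (lam : ℝ) : Fin n → Fin n → ℝ :=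
  fun i j => if |(i.val : ℤ) - (j.val : ℤ)| ≤ ((k / 2 : ℕ) : ℤ) then lam else 0

/-- `M` is one of the six models (HS-I), (HS-P), (SBM-I), (SBM-P), (TS-I), (TS-P). -/
def IsSix (n k : ℕ) (q lam : ℝ) (M : Model n) : Prop :=
  M.q = q ∧ (M.wz = wIndep n ∨ M.wz = wPerm n) ∧
    (M.Θ = thetaHS n k lam ∨ (k ∣ n ∧ M.Θ = thetaSBM n k lam) ∨
      (2 ∣ k ∧ M.Θ = thetaTS n k lam))

/-! ### Pinned templates -/

/-- A pinned template: a graph with two distinguished distinct vertices `v1, v2` (which may be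
isolated) and no other isolated vertex. -/
structure PGraf where
  m : ℕ
  Ed : Finset (Sym2 (Fin m))
  not_diag : ∀ e ∈ Ed, ¬ e.IsDiag
  v1 : Fin m
  v2 : Fin m
  hne : v1 ≠ v2
  no_isolated : ∀ v : Fin m, v ≠ v1 → v ≠ v2 → ∃ e ∈ Ed, v ∈ e

/-- Underlying unpinned graph. -/
def PGraf.G (P : PGraf) : Graf := ⟨P.m, P.Ed, P.not_diag⟩

/-- Injections sending the distinguished vertices to the nodes `1` and `2`
(i.e. to `0` and `1` in `Fin n`). -/
def pinjs (P : PGraf) (n : ℕ) : Finset (Fin P.m → Fin n) :=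
  Finset.univ.filter
    (fun π => Function.Injective π ∧ (π P.v1).val = 0 ∧ (π P.v2).val = 1)

/-- `P̄^{(1,2)}_G`. -/
def PbarP {n : ℕ} (M : Model n) (P : PGraf) (Y : Obs n) : ℝ :=
  ∑ π ∈ pinjs P n, cmono M P.G π Y

/-- Number of automorphisms fixing the two distinguished vertices. -/
def PGraf.autCard (P : PGraf) : ℕ :=
  (Finset.univ.filter (fun σ : Equiv.Perm (Fin P.m) =>
    (∀ e : Sym2 (Fin P.m), e.map σ ∈ P.Ed ↔ e ∈ P.Ed) ∧ σ P.v1 = P.v1 ∧ σ P.v2 = P.v2)).card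

/-- `𝕍^{(1,2)}(G)`. -/
def VproxyP {n : ℕ} (M : Model n) (P : PGraf) : ℝ :=
  ((n - 2).descFactorial (P.m - 2) : ℝ) * (P.autCard : ℝ) * M.qbar ^ P.Ed.card

/-- `Ψ^{(1,2)}_G`. -/
def PsiP {n : ℕ} (M : Model n) (P : PGraf) (Y : Obs n) : ℝ :=
  PbarP M P Y / Real.sqrt (VproxyP M P)

/-- Equivalence of pinned templates. -/
def PGraf.Equiv (P₁ P₂ : PGraf) : Prop :=
  ∃ σ : Fin P₁.m ≃ Fin P₂.m,
    (∀ e : Sym2 (Fin P₁.m), e.map σ ∈ P₂.Ed ↔ e ∈ P₁.Ed) ∧ σ P₁.v1 = P₂.v1 ∧ σ P₁.v2 = P₂.v2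

/-- A maximal family of pairwise non-equivalent pinned templates with between 1 and `D` edges. -/
structure IsPFamily (D : ℕ) (Pfam : Finset PGraf) : Prop where
  edges_lb : ∀ P ∈ Pfam, 1 ≤ P.Ed.card
  edges_ub : ∀ P ∈ Pfam, P.Ed.card ≤ D
  pairwise_nonequiv : ∀ P₁ ∈ Pfam, ∀ P₂ ∈ Pfam, P₁ ≠ P₂ → ¬ P₁.Equiv P₂
  maximal : ∀ P : PGraf, 1 ≤ P.Ed.card → P.Ed.card ≤ D → ∃ P' ∈ Pfam, P.Equiv P'

/-! ### Polynomials, advantage, correlation -/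

/-- Evaluation of a polynomial in the variables `(Y_{ij})_{i<j}`. -/
def evalPoly {n : ℕ} (f : MvPolynomial (Idx n) ℝ) (Y : Obs n) : ℝ :=
  MvPolynomial.eval Y f

/-- The estimation target `x = 1{Θ_{z₁ z₂} ≠ 0}`. -/
def xVal {n : ℕ} (M : Model n) (z : Fin n → Fin n) : ℝ :=
  if h : 1 < n then
    (if M.Θ (z ⟨0, by omega⟩) (z ⟨1, h⟩) ≠ 0 then 1 else 0)
  else 0

/-- Low-degree correlation `Corr_{≤ D}` for estimating `x`. -/
def Corr {n : ℕ} (M : Model n) (D : ℕ) : ℝ :=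
  sSup {r : ℝ | ∃ f : MvPolynomial (Idx n) ℝ, f.totalDegree ≤ D ∧
    0 < M.E (fun Y => (evalPoly f Y) ^ 2) ∧
    r = M.EOm (fun z y => evalPoly f (obsIdx M.q y) * xVal M z) /
        Real.sqrt (M.E (fun Y => (evalPoly f Y) ^ 2))}

/-- Low-degree advantage `Adv_{≤ D}`, for an alternative expectation functional `E1`. -/
def Adv {n : ℕ} (M : Model n) (E1 : (Obs n → ℝ) → ℝ) (D : ℕ) : ℝ :=
  sSup {r : ℝ | ∃ f : MvPolynomial (Idx n) ℝ, f.totalDegree ≤ D ∧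
    0 < M.E (fun Y => (evalPoly f Y) ^ 2) ∧
    r = E1 (evalPoly f) / Real.sqrt (M.E (fun Y => (evalPoly f Y) ^ 2))}

/-! ### The altered distributions -/

/-- The altered mean matrix: the rows and columns of nodes `i` in the target set whose coin `b i`
came up are set to zero. -/
def altMat {n : ℕ} (Θ : Fin n → Fin n → ℝ) (z : Fin n → Fin n) (T : Fin n → Prop)
    (b : Fin n → Bool) : Fin n → Fin n → ℝ :=
  fun i j => if (T i ∧ b i = true) ∨ (T j ∧ b j = true) then 0 else Θ (z i) (z j)

/-- Expectation under the altered distribution `P_{H1}`: an auxiliary uniform label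
`l ∈ Fin L` is drawn, each node `i` of the target set `T z l` is erased independently with
probability `ε`, and the graph is drawn with the altered mean matrix. -/
def Model.EH1 {n : ℕ} (M : Model n) (L : ℕ)
    (T : (Fin n → Fin n) → Fin L → Fin n → Prop) (ε : ℝ) (f : Obs n → ℝ) : ℝ :=
  ∑ z : Fin n → Fin n, ∑ l : Fin L, ∑ b : Fin n → Bool, ∑ y : Fin n → Fin n → Bool,
    M.wz z * (L : ℝ)⁻¹ * (∏ i : Fin n, bern ε (b i)) *
      wObsA M.q (altMat M.Θ z (T z l) b) y * f (obsIdx M.q y)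

/-! ### Matchings between two templates and labeled merged graphs -/

/-- A matching: a set of pairs of nodes in which no node appears twice. -/
def IsMatching {m₁ m₂ : ℕ} (Mm : Finset (Fin m₁ × Fin m₂)) : Prop :=
  ∀ p ∈ Mm, ∀ p' ∈ Mm, (p.1 = p'.1 ↔ p.2 = p'.2)

/-- An edge of `G₁` is matched by `Mm`. -/
def matched1 (G₁ G₂ : Graf) (Mm : Finset (Fin G₁.m × Fin G₂.m)) (e : Sym2 (Fin G₁.m)) : Prop :=
  ∃ p ∈ Mm, ∃ p' ∈ Mm, e = s(p.1, p'.1) ∧ s(p.2, p'.2) ∈ G₂.Ed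

/-- An edge of `G₂` is matched by `Mm`. -/
def matched2 (G₁ G₂ : Graf) (Mm : Finset (Fin G₁.m × Fin G₂.m)) (e : Sym2 (Fin G₂.m)) : Prop :=
  ∃ p ∈ Mm, ∃ p' ∈ Mm, e = s(p.2, p'.2) ∧ s(p.1, p'.1) ∈ G₁.Ed

/-- A pair of the matching is perfectly matched. -/
def pairPerfect (G₁ G₂ : Graf) (Mm : Finset (Fin G₁.m × Fin G₂.m))
    (p : Fin G₁.m × Fin G₂.m) : Prop :=
  (∀ e ∈ G₁.Ed, p.1 ∈ e → matched1 G₁ G₂ Mm e) ∧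
  (∀ e ∈ G₂.Ed, p.2 ∈ e → matched2 G₁ G₂ Mm e)

/-- The semi-matched pairs `M_SM(M)`. -/
def Msm (G₁ G₂ : Graf) (Mm : Finset (Fin G₁.m × Fin G₂.m)) : Finset (Fin G₁.m × Fin G₂.m) :=
  Mm.filter (fun p => ¬ pairPerfect G₁ G₂ Mm p)

/-- The unmatched nodes `U^{(1)}(M)` of `G₁`. -/
def Uset1 (G₁ G₂ : Graf) (Mm : Finset (Fin G₁.m × Fin G₂.m)) : Finset (Fin G₁.m) :=
  Finset.univ.filter (fun v => ∀ p ∈ Mm, p.1 ≠ v)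

/-- The unmatched nodes `U^{(2)}(M)` of `G₂`. -/
def Uset2 (G₁ G₂ : Graf) (Mm : Finset (Fin G₁.m × Fin G₂.m)) : Finset (Fin G₂.m) :=
  Finset.univ.filter (fun v => ∀ p ∈ Mm, p.2 ≠ v)

/-- `Mm` is a perfect matching (`Mm ∈ 𝓜_PM`). -/
def IsPerfectM (G₁ G₂ : Graf) (Mm : Finset (Fin G₁.m × Fin G₂.m)) : Prop :=
  Uset1 G₁ G₂ Mm = ∅ ∧ Uset2 G₁ G₂ Mm = ∅ ∧ Msm G₁ G₂ Mm = ∅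

/-- `Mm ∈ 𝓜*`: every connected component of `G₁` and of `G₂` meets the matching. -/
def InMstar (G₁ G₂ : Graf) (Mm : Finset (Fin G₁.m × Fin G₂.m)) : Prop :=
  (∀ v : Fin G₁.m, ∃ p ∈ Mm, G₁.graph.Reachable p.1 v) ∧
  (∀ v : Fin G₂.m, ∃ p ∈ Mm, G₂.graph.Reachable p.2 v)

/-- `(π₁, π₂) ∈ Π(M)`: injections compatible with exactly the matching `Mm`. -/
def InPi {n : ℕ} (G₁ G₂ : Graf) (Mm : Finset (Fin G₁.m × Fin G₂.m))
    (π₁ : Fin G₁.m → Fin n) (π₂ : Fin G₂.m → Fin n) : Prop :=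
  Function.Injective π₁ ∧ Function.Injective π₂ ∧
    ∀ (v : Fin G₁.m) (v' : Fin G₂.m), (π₁ v = π₂ v' ↔ (v, v') ∈ Mm)

/-- Labeled edge set of `G[π]`. -/
def lE {n : ℕ} (G : Graf) (π : Fin G.m → Fin n) : Finset (Sym2 (Fin n)) :=
  G.Ed.image (Sym2.map π)

/-- Labeled intersection edge set `E_∩`. -/
def lEcap {n : ℕ} (G₁ G₂ : Graf) (π₁ : Fin G₁.m → Fin n) (π₂ : Fin G₂.m → Fin n) :
    Finset (Sym2 (Fin n)) :=
  lE G₁ π₁ ∩ lE G₂ π₂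

/-- Labeled union edge set `E_∪`. -/
def lEcup {n : ℕ} (G₁ G₂ : Graf) (π₁ : Fin G₁.m → Fin n) (π₂ : Fin G₂.m → Fin n) :
    Finset (Sym2 (Fin n)) :=
  lE G₁ π₁ ∪ lE G₂ π₂

/-- Labeled symmetric-difference edge set `E_Δ`. -/
def lEdel {n : ℕ} (G₁ G₂ : Graf) (π₁ : Fin G₁.m → Fin n) (π₂ : Fin G₂.m → Fin n) :
    Finset (Sym2 (Fin n)) :=
  lEcup G₁ G₂ π₁ π₂ \ lEcap G₁ G₂ π₁ π₂

/-- Nodes incident to a set of labeled edges. -/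
def vertsOf {n : ℕ} (F : Finset (Sym2 (Fin n))) : Finset (Fin n) :=
  Finset.univ.filter (fun v => ∃ e ∈ F, v ∈ e)

/-- The simple graph with the given labeled edge set. -/
def graphOf {n : ℕ} (F : Finset (Sym2 (Fin n))) : SimpleGraph (Fin n) where
  Adj u v := u ≠ v ∧ s(u, v) ∈ F
  symm := by
    constructor
    intro u v h
    exact ⟨h.1.symm, by rw [Sym2.eq_swap]; exact h.2⟩
  loopless := by constructor; intro v h; exact h.1 rfl

/-- Number of connected components of a labeled edge set. -/
def ccOf {n : ℕ} (F : Finset (Sym2 (Fin n))) : ℕ :=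
  ((vertsOf F).image (fun v => (graphOf F).connectedComponentMk v)).card

/-- Vertex set of the connected component of `v` in a labeled edge set. -/
def compSetOf {n : ℕ} (F : Finset (Sym2 (Fin n))) (v : Fin n) : Finset (Fin n) :=
  (vertsOf F).filter (fun w => (graphOf F).Reachable v w)

/-- The (vertex sets of the) pure connected components of `G_Δ`: those lying entirely in
`π₁(V₁) \ π₂(V₂)`, or entirely in `π₂(V₂) \ π₁(V₁)`. -/
def pureParts {n : ℕ} (G₁ G₂ : Graf) (π₁ : Fin G₁.m → Fin n) (π₂ : Fin G₂.m → Fin n) :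
    Finset (Finset (Fin n)) :=
  ((vertsOf (lEdel G₁ G₂ π₁ π₂)).image (compSetOf (lEdel G₁ G₂ π₁ π₂))).filter
    (fun s => (∀ v ∈ s, v ∈ Finset.univ.image π₁ ∧ v ∉ Finset.univ.image π₂) ∨
              (∀ v ∈ s, v ∈ Finset.univ.image π₂ ∧ v ∉ Finset.univ.image π₁))

/-- `#CC_pure`. -/
def ccPure {n : ℕ} (G₁ G₂ : Graf) (π₁ : Fin G₁.m → Fin n) (π₂ : Fin G₂.m → Fin n) : ℕ :=
  (pureParts G₁ G₂ π₁ π₂).card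

/-- The remaining nodes `ω₀` of `G_∪`. -/
def restPart {n : ℕ} (G₁ G₂ : Graf) (π₁ : Fin G₁.m → Fin n) (π₂ : Fin G₂.m → Fin n) :
    Finset (Fin n) :=
  (vertsOf (lEcup G₁ G₂ π₁ π₂)).filter (fun v => ∀ s ∈ pureParts G₁ G₂ π₁ π₂, v ∉ s)

/-- The vertex classes `ω₀, ω₁, …` of the contracted graph `𝒩[z; G_∪]`. -/
def omegaParts {n : ℕ} (G₁ G₂ : Graf) (π₁ : Fin G₁.m → Fin n) (π₂ : Fin G₂.m → Fin n) :
    Finset (Finset (Fin n)) :=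
  if (restPart G₁ G₂ π₁ π₂).Nonempty then
    insert (restPart G₁ G₂ π₁ π₂) (pureParts G₁ G₂ π₁ π₂)
  else pureParts G₁ G₂ π₁ π₂

/-- The contracted graph `𝒩[z; G_∪]` is connected: parts are joined by sharing latent values. -/
def partsConn {n : ℕ} (parts : Finset (Finset (Fin n))) (z : Fin n → Fin n) : Prop :=
  ∀ s ∈ parts, ∀ t ∈ parts,
    Relation.ReflTransGen
      (fun a b : Finset (Fin n) => a ∈ parts ∧ b ∈ parts ∧ ∃ i ∈ a, ∃ j ∈ b, z i = z j) s t

/-! ### Generic conditions -/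

/-- `p̄ = p (1-q)² + (1-p) q²` with `p = λ + q`. -/
def pbarOf (q lam : ℝ) : ℝ := (lam + q) * (1 - q) ^ 2 + (1 - (lam + q)) * q ^ 2

/-- Condition C-Signal. -/
def CSignal (n k D : ℕ) (q lam cs : ℝ) : Prop :=
  signal n k q lam ≤ (D : ℝ) ^ (-(8 * cs))

/-- Condition C-Moment. -/
def CMoment {n : ℕ} (M : Model n) (k D : ℕ) (lam cm : ℝ) : Prop :=
  ∀ G : Graf, G.IsTemplate → G.Ed.card ≤ D →
    ∀ π : Fin G.m → Fin n, Function.Injective π →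
      |M.E (monoE G.Ed π)| ≤
        ((D : ℝ) ^ cm * lam) ^ G.Ed.card * ((D : ℝ) ^ cm * k / n) ^ (G.m - G.ccCount)

/-- Condition C-Variance (relative to a family of templates). -/
def CVariance {n : ℕ} (M : Model n) (k D : ℕ) (lam c1 c2 c3 c4 : ℝ)
    (𝒢 : Finset Graf) : Prop :=
  (∀ G₁ ∈ 𝒢, ∀ G₂ ∈ 𝒢, ∀ Mm : Finset (Fin G₁.m × Fin G₂.m),
      IsMatching Mm → ¬ IsPerfectM G₁ G₂ Mm →
      ∀ (π₁ : Fin G₁.m → Fin n) (π₂ : Fin G₂.m → Fin n), InPi G₁ G₂ Mm π₁ π₂ →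
        |M.E (fun Y => monoE G₁.Ed π₁ Y * monoE G₂.Ed π₂ Y)| ≤
          c2 * ((D : ℝ) ^ c1 * lam) ^ (lEdel G₁ G₂ π₁ π₂).card *
            pbarOf M.q lam ^ (lEcap G₁ G₂ π₁ π₂).card *
            ((D : ℝ) ^ c1 * k / n) ^
              ((vertsOf (lEdel G₁ G₂ π₁ π₂)).card - ccOf (lEdel G₁ G₂ π₁ π₂))) ∧
  (∀ G ∈ 𝒢, ∀ π : Fin G.m → Fin n, Function.Injective π →
      |M.E (fun Y => (monoE G.Ed π Y) ^ 2) - M.qbar ^ G.Ed.card| ≤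
        c3 * (D : ℝ) ^ (-c4) * M.qbar ^ G.Ed.card)

/-- The companion Independent-Sampling model (same `q` and `Θ`). -/
def indepOf {n : ℕ} (M : Model n) : Model n := ⟨M.q, M.Θ, wIndep n⟩

/-- Condition C-Variance-Permutation (relative to a family of templates). -/
def CVarPerm {n : ℕ} (M : Model n) (k D : ℕ) (lam cd1 cd2 : ℝ)
    (𝒢 : Finset Graf) : Prop :=
  ∀ G₁ ∈ 𝒢, ∀ G₂ ∈ 𝒢, ∀ Mm : Finset (Fin G₁.m × Fin G₂.m),
    IsMatching Mm → ¬ IsPerfectM G₁ G₂ Mm →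
    ∀ (π₁ : Fin G₁.m → Fin n) (π₂ : Fin G₂.m → Fin n), InPi G₁ G₂ Mm π₁ π₂ →
      |(indepOf M).EOm (fun z y =>
          (if partsConn (omegaParts G₁ G₂ π₁ π₂) z then (1 : ℝ) else 0) *
            (monoE G₁.Ed π₁ (obsIdx M.q y) * monoE G₂.Ed π₂ (obsIdx M.q y)))| ≤
        cd2 * (D : ℝ) ^ cd1 * ((D : ℝ) ^ cd1 * lam) ^ (lEdel G₁ G₂ π₁ π₂).card *
          pbarOf M.q lam ^ (lEcap G₁ G₂ π₁ π₂).card *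
          ((D : ℝ) ^ cd1 * k / n) ^
            ((vertsOf (lEdel G₁ G₂ π₁ π₂)).card - ccOf (lEdel G₁ G₂ π₁ π₂)) *
          (cd2 * (D : ℝ) ^ cd1 / Real.sqrt n) ^ ccPure G₁ G₂ π₁ π₂

/-! ### Edit distance -/

/-- `|E_Δ|` attached to a matching, counted without labels. -/
def EdelCard (G₁ G₂ : Graf) (Mm : Finset (Fin G₁.m × Fin G₂.m)) : ℕ :=
  (G₁.Ed.filter (fun e => ¬ matched1 G₁ G₂ Mm e)).card +
  (G₂.Ed.filter (fun e => ¬ matched2 G₁ G₂ Mm e)).card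

/-- The edit distance `d(G₁, G₂) = min_{M ∈ 𝓜} |E_Δ|`. -/
def editDist (G₁ G₂ : Graf) : ℕ :=
  sInf {c : ℕ | ∃ Mm : Finset (Fin G₁.m × Fin G₂.m), IsMatching Mm ∧ c = EdelCard G₁ G₂ Mm}

/-! ### Permutation action and invariance -/

/-- Action of a permutation of the nodes on an index pair. -/
def permIdx {n : ℕ} (σ : Equiv.Perm (Fin n)) (p : Idx n) : Idx n :=
  ⟨(min (σ p.1.1) (σ p.1.2), max (σ p.1.1) (σ p.1.2)),
    min_lt_max.mpr (fun h => p.2.ne (σ.injective h))⟩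

/-- `(Y_σ)_{ij} = Y_{σ(i) σ(j)}`. -/
def permuteObs {n : ℕ} (σ : Equiv.Perm (Fin n)) (Y : Obs n) : Obs n :=
  fun p => Y (permIdx σ p)

/-- The symmetrized polynomial `f_inv`. -/
def finv {n : ℕ} (f : MvPolynomial (Idx n) ℝ) (Y : Obs n) : ℝ :=
  ((n.factorial : ℝ))⁻¹ * ∑ σ : Equiv.Perm (Fin n), evalPoly f (permuteObs σ Y)

/-- Low-degree advantage for testing two measures. -/
def AdvM {n : ℕ} (μ ν : Measure (Obs n)) (D : ℕ) : ℝ :=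
  sSup {r : ℝ | ∃ f : MvPolynomial (Idx n) ℝ, f.totalDegree ≤ D ∧
    0 < ∫ Y, (evalPoly f Y) ^ 2 ∂μ ∧
    r = (∫ Y, evalPoly f Y ∂ν) / Real.sqrt (∫ Y, (evalPoly f Y) ^ 2 ∂μ)}

/-- The invariant polynomial `P_G`. -/
def PG {n : ℕ} (G : Graf) (Y : Obs n) : ℝ :=
  ∑ π ∈ injs G.m n, monoE G.Ed π Y

/-- The hidden-subclique model (HS-I) with `q = 1/2`. -/
def modelHSI (n k : ℕ) (lam : ℝ) : Model n := ⟨1 / 2, thetaHS n k lam, wIndep n⟩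

/-- The signal condition `(λk/√(q̄ n)) ∨ (λ/√q̄) ∨ (k/n) ≤ D^{-8c₀}` with `q̄ = 1/4`. -/
def signalHS (n k D : ℕ) (lam c0 : ℝ) : Prop :=
  max (max (lam * k / Real.sqrt ((1 / 4 : ℝ) * n)) (lam / Real.sqrt (1 / 4 : ℝ)))
      ((k : ℝ) / n)
    ≤ (D : ℝ) ^ (-(8 * c0))

open scoped symmDiff

lemma prod_mul_prod_eq_prod_inter_sq_mul_prod_symmDiff {α M : Type*} [DecidableEq α]
    [CommMonoid M] (s t : Finset α) (g : α → M) :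
    (∏ a ∈ s, g a) * ∏ a ∈ t, g a = (∏ a ∈ s ∩ t, g a ^ 2) * ∏ a ∈ s ∆ t, g a := by
  rw [Finset.symmDiff_def, Finset.prod_union disjoint_sdiff_sdiff,
    ← Finset.prod_inter_mul_prod_sdiff s t, ← Finset.prod_inter_mul_prod_sdiff t s,
    Finset.inter_comm t s, Finset.prod_pow, sq]
  exact mul_mul_mul_comm _ _ _ _

lemma card_symmDiff_add_two_mul_card_inter {α : Type*} [DecidableEq α] (s t : Finset α) :
    (s ∆ t).card + 2 * (s ∩ t).card = s.card + t.card := by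
  have := Finset.card_sdiff_add_card_eq_card (Finset.inter_subset_union (s := s) (t := t))
  have := Finset.card_union_add_card_inter s t
  rw [symmDiff_eq_sup_sdiff_inf, Finset.sup_eq_union, Finset.inf_eq_inter]
  omega

lemma card_symmDiff_union_union {α : Type*} [DecidableEq α] {R₁ S₁ R₂ S₂ : Finset α}
    (h₁ : Disjoint R₁ S₁) (h₂ : Disjoint R₂ S₂) :
    (R₁ ∆ R₂).card + S₁.card + S₂.card + 2 * (R₁ ∩ R₂).card
      = ((R₁ ∪ S₁) ∆ (R₂ ∪ S₂)).card + 2 * ((R₁ ∪ S₁) ∩ (R₂ ∪ S₂)).card := by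
  have := card_symmDiff_add_two_mul_card_inter R₁ R₂
  rw [card_symmDiff_add_two_mul_card_inter, Finset.card_union_of_disjoint h₁,
    Finset.card_union_of_disjoint h₂]
  omega

lemma symmDiff_union_union_subset {α : Type*} [DecidableEq α] (R₁ S₁ R₂ S₂ : Finset α) :
    (R₁ ∪ S₁) ∆ (R₂ ∪ S₂) ⊆ R₁ ∆ R₂ ∪ S₁ ∪ S₂ := fun a => by
  simp only [Finset.mem_symmDiff, Finset.mem_union]
  tauto

/-- Each point of `T₁` or `T₂` is counted at least twice on the right, each point of `D`
at least once. -/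
lemma card_add_card_add_two_mul_card_le {α : Type*} [DecidableEq α] {A B C T₁ T₂ D : Finset α}
    (h₁ : T₁ ⊆ A ∩ B ∪ (A ∪ B) ∩ C) (h₂ : T₂ ⊆ A ∩ B ∪ (A ∪ B) ∩ C) (hD : D ⊆ A ∪ B ∪ C) :
    T₁.card + T₂.card + 2 * D.card ≤ 2 * (A.card + B.card + C.card) := by
  have hT₁ := Finset.card_le_card h₁
  have hT₂ := Finset.card_le_card h₂
  have hD' := Finset.card_le_card hD
  have := Finset.card_union_le (A ∩ B) ((A ∪ B) ∩ C)
  have := Finset.card_union_add_card_inter A B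
  have := Finset.card_union_add_card_inter (A ∪ B) C
  omega

lemma quarter_pow_mul_le {lam r : ℝ} (hlam₀ : 0 ≤ lam) (hlam : lam ≤ 1 / 2) (hr₀ : 0 < r)
    (hr₁ : r ≤ 1) {c C e₀ e₁ e₂ E a b₁ b₂ d s : ℕ} (hc : c ≤ C)
    (he : e₀ + e₁ + e₂ + 2 * c = E + 2 * C) (hv : s + 2 * d ≤ 2 * (a + b₁ + b₂)) :
    (1 / 4) ^ c * (lam ^ e₀ * r ^ a) * (lam ^ e₁ * r ^ b₁) * (lam ^ e₂ * r ^ b₂)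
      ≤ r ^ ((s : ℝ) / 2) * ((1 / 4) ^ C * (lam ^ E * r ^ d)) := by
  obtain ⟨t, rfl⟩ := Nat.exists_eq_add_of_le hc
  have hlam_pow : lam ^ e₀ * lam ^ e₁ * lam ^ e₂ = (lam ^ 2) ^ t * lam ^ E := by
    rw [← pow_add, ← pow_add, ← pow_mul, ← pow_add]
    congr 1
    omega
  have hr_pow : r ^ a * r ^ b₁ * r ^ b₂ ≤ r ^ ((s : ℝ) / 2) * r ^ d := by
    rw [← pow_add, ← pow_add, ← Real.rpow_natCast, ← Real.rpow_natCast r d,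
      ← Real.rpow_add hr₀]
    refine Real.rpow_le_rpow_of_exponent_ge hr₀ hr₁ ?_
    have : (s : ℝ) + 2 * d ≤ 2 * (a + b₁ + b₂) := by exact_mod_cast hv
    push_cast
    linarith
  have hlam_sq : lam ^ 2 ≤ 1 / 4 := by nlinarith
  calc (1 / 4) ^ c * (lam ^ e₀ * r ^ a) * (lam ^ e₁ * r ^ b₁) * (lam ^ e₂ * r ^ b₂)
      = (1 / 4) ^ c * ((lam ^ 2) ^ t * lam ^ E) * (r ^ a * r ^ b₁ * r ^ b₂) := by
        rw [← hlam_pow]; ring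
    _ ≤ (1 / 4) ^ c * ((1 / 4) ^ t * lam ^ E) * (r ^ ((s : ℝ) / 2) * r ^ d) := by
        gcongr
    _ = r ^ ((s : ℝ) / 2) * ((1 / 4) ^ (c + t) * (lam ^ E * r ^ d)) := by
        rw [pow_add]; ring

lemma inf_lt_sup_of_not_isDiag {α : Type*} [LinearOrder α] {f : Sym2 α} (hf : ¬ f.IsDiag) :
    f.inf < f.sup := by
  induction f using Sym2.ind with
  | _ a b => exact inf_lt_sup.mpr (Sym2.mk_isDiag_iff.not.mp hf)

lemma mk_inf_sup {α : Type*} [LinearOrder α] (f : Sym2 α) : s(f.inf, f.sup) = f :=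
  Sym2.sortEquiv.symm_apply_apply f

lemma edgeValSym_eq {n : ℕ} (Y : Obs n) {f : Sym2 (Fin n)} (hf : ¬ f.IsDiag) :
    edgeValSym Y f = Y ⟨(f.inf, f.sup), inf_lt_sup_of_not_isDiag hf⟩ := by
  induction f using Sym2.ind with
  | _ a b => exact dif_neg (Sym2.mk_isDiag_iff.not.mp hf)

lemma edgeValSym_obsIdx {n : ℕ} (q : ℝ) (y : Fin n → Fin n → Bool) {f : Sym2 (Fin n)}
    (hf : ¬ f.IsDiag) :
    edgeValSym (obsIdx q y) f = (if y f.inf f.sup then 1 else 0) - q :=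
  edgeValSym_eq _ hf

lemma sum_bern_mul_centered (q a : ℝ) :
    ∑ b : Bool, bern (q + a) b * ((if b then 1 else 0) - q) = a := by
  simp [bern]; ring

lemma sum_bern (p : ℝ) : ∑ b : Bool, bern p b = 1 := by
  simp [bern]

lemma sum_wObsA_mul_prod_edgeValSym {n : ℕ} (q : ℝ) (A : Fin n → Fin n → ℝ)
    {B : Finset (Sym2 (Fin n))} (hB : ∀ f ∈ B, ¬ f.IsDiag) :
    ∑ y, wObsA q A y * ∏ f ∈ B, edgeValSym (obsIdx q y) f = ∏ f ∈ B, A f.inf f.sup := by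
  set P := B.image fun f => (f.inf, f.sup)
  have hP_inj : Set.InjOn (fun f : Sym2 (Fin n) => (f.inf, f.sup)) B := fun f _ g _ h => by
    rw [← mk_inf_sup f, ← mk_inf_sup g]
    simp only [Prod.mk.injEq] at h
    rw [h.1, h.2]
  have hP_lt : ∀ p ∈ P, p.1 < p.2 := by
    simp only [P, Finset.mem_image]
    rintro p ⟨f, hf, rfl⟩
    exact inf_lt_sup_of_not_isDiag (hB f hf)
  let g : Fin n × Fin n → Bool → ℝ := fun p b =>
    (if p.1 < p.2 then bern (q + A p.1 p.2) b else 1 / 2) *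
      (if p ∈ P then (if b then 1 else 0) - q else 1)
  have integrand : ∀ y : Fin n → Fin n → Bool,
      wObsA q A y * ∏ f ∈ B, edgeValSym (obsIdx q y) f = ∏ p, g p (y p.1 p.2) := by
    intro y
    rw [Finset.prod_mul_distrib, wObsA, ← Fintype.prod_prod_type', Finset.prod_ite_mem,
      Finset.univ_inter, Finset.prod_image hP_inj]
    exact congrArg _ (Finset.prod_congr rfl fun f hf => edgeValSym_obsIdx q y (hB f hf))
  have factor : ∀ p, ∑ b, g p b = if p ∈ P then A p.1 p.2 else 1 := by
    intro p
    by_cases hp : p ∈ P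
    · simp only [g, hp, hP_lt p hp, if_true, sum_bern_mul_centered]
    · by_cases hlt : p.1 < p.2
      · simp only [g, hp, hlt, if_true, if_false, mul_one, sum_bern]
      · simp [g, hp, hlt]
  calc ∑ y, wObsA q A y * ∏ f ∈ B, edgeValSym (obsIdx q y) f
      = ∑ y : Fin n × Fin n → Bool, ∏ p, g p (y p) :=
        (Fintype.sum_equiv (Equiv.curry _ _ _).symm _ _ fun y => integrand y)
    _ = ∏ p, ∑ b, g p b := (Fintype.prod_sum g).symm
    _ = ∏ f ∈ B, A f.inf f.sup := by
        rw [Fintype.prod_congr _ _ factor, Finset.prod_ite_mem, Finset.univ_inter,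
          Finset.prod_image hP_inj]

lemma prod_thetaHS {n : ℕ} (k : ℕ) (lam : ℝ) (z : Fin n → Fin n) (B : Finset (Sym2 (Fin n))) :
    ∏ f ∈ B, thetaHS n k lam (z f.inf) (z f.sup)
      = lam ^ B.card * ∏ v ∈ vertsOf B, if (z v : ℕ) < k then 1 else 0 := by
  have factor : ∀ f ∈ B, thetaHS n k lam (z f.inf) (z f.sup)
      = lam * if (z f.inf : ℕ) < k ∧ (z f.sup : ℕ) < k then 1 else 0 := fun f _ => by
    simp only [thetaHS]; split_ifs <;> simp
  have mem_iff : ∀ f : Sym2 (Fin n), ∀ v, v ∈ f ↔ v = f.inf ∨ v = f.sup := fun f v => by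
    conv_lhs => rw [← mk_inf_sup f]
    exact Sym2.mem_iff
  rw [Finset.prod_congr rfl factor, Finset.prod_mul_distrib, Finset.prod_const,
    Finset.prod_boole, Finset.prod_boole]
  congr 2
  simp only [vertsOf, Finset.mem_filter, Finset.mem_univ, true_and, mem_iff]
  grind

lemma sum_wIndep_mul_prod_indicator {n k : ℕ} (hn : 0 < n) (hkn : k ≤ n) (V : Finset (Fin n)) :
    ∑ z, wIndep n z * ∏ v ∈ V, (if (z v : ℕ) < k then 1 else 0 : ℝ) = ((k : ℝ) / n) ^ V.card := by
  have hn' : (n : ℝ) ≠ 0 := by positivity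
  let h : Fin n → Fin n → ℝ := fun v t =>
    (n : ℝ)⁻¹ * if v ∈ V then (if (t : ℕ) < k then 1 else 0) else 1
  have integrand : ∀ z : Fin n → Fin n,
      wIndep n z * ∏ v ∈ V, (if (z v : ℕ) < k then 1 else 0 : ℝ) = ∏ v, h v (z v) := fun z => by
    rw [Finset.prod_mul_distrib, Finset.prod_const, Finset.card_univ, Fintype.card_fin,
      Finset.prod_ite_mem, Finset.univ_inter, wIndep, inv_pow]
  have factor : ∀ v, ∑ t, h v t = if v ∈ V then (k : ℝ) / n else 1 := fun v => by
    by_cases hv : v ∈ V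
    · have hcard : (Finset.univ.filter fun t : Fin n => (t : ℕ) < k).card = k := by
        rw [Fin.card_filter_val_lt, min_eq_right hkn]
      simp only [h, hv, if_true, ← Finset.mul_sum, Finset.sum_boole, hcard]
      ring
    · simp [h, hv, hn']
  rw [Fintype.sum_congr _ _ integrand, ← Fintype.prod_sum, Fintype.prod_congr _ _ factor,
    Finset.prod_ite_mem, Finset.univ_inter, Finset.prod_const]

lemma Model.E_congr {n : ℕ} (M : Model n) {f g : Obs n → ℝ}
    (h : ∀ y, f (obsIdx M.q y) = g (obsIdx M.q y)) : M.E f = M.E g := by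
  simp only [Model.E, Model.EOm, h]

lemma Model.E_const_mul {n : ℕ} (M : Model n) (c : ℝ) (f : Obs n → ℝ) :
    M.E (fun Y => c * f Y) = c * M.E f := by
  simp only [Model.E, Model.EOm, Finset.mul_sum]
  exact Fintype.sum_congr _ _ fun z => Fintype.sum_congr _ _ fun y => by ring

lemma modelHSI_E_prod_edgeValSym {n k : ℕ} (lam : ℝ) (hn : 0 < n) (hkn : k ≤ n)
    {B : Finset (Sym2 (Fin n))} (hB : ∀ f ∈ B, ¬ f.IsDiag) :
    (modelHSI n k lam).E (fun Y => ∏ f ∈ B, edgeValSym Y f)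
      = lam ^ B.card * ((k : ℝ) / n) ^ (vertsOf B).card := by
  calc (modelHSI n k lam).E (fun Y => ∏ f ∈ B, edgeValSym Y f)
      = ∑ z, wIndep n z * ∑ y, wObsA (1 / 2) (fun i j => thetaHS n k lam (z i) (z j)) y *
          ∏ f ∈ B, edgeValSym (obsIdx (1 / 2) y) f := by
        simp only [Model.E, Model.EOm, modelHSI, wObs, Finset.mul_sum, mul_assoc]
    _ = lam ^ B.card * ∑ z, wIndep n z * ∏ v ∈ vertsOf B, if (z v : ℕ) < k then 1 else 0 := by
        simp only [sum_wObsA_mul_prod_edgeValSym _ _ hB, prod_thetaHS, Finset.mul_sum]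
        exact Fintype.sum_congr _ _ fun z => by ring
    _ = lam ^ B.card * ((k : ℝ) / n) ^ (vertsOf B).card := by
        rw [sum_wIndep_mul_prod_indicator hn hkn]

lemma edgeValSym_obsIdx_half_sq {n : ℕ} (y : Fin n → Fin n → Bool) {f : Sym2 (Fin n)}
    (hf : ¬ f.IsDiag) : edgeValSym (obsIdx (1 / 2) y) f ^ 2 = 1 / 4 := by
  rw [edgeValSym_obsIdx _ _ hf]
  split_ifs <;> norm_num

lemma modelHSI_E_prod_mul_prod_edgeValSym {n k : ℕ} (lam : ℝ) (hn : 0 < n) (hkn : k ≤ n)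
    {F₁ F₂ : Finset (Sym2 (Fin n))} (hF₁ : ∀ f ∈ F₁, ¬ f.IsDiag) (hF₂ : ∀ f ∈ F₂, ¬ f.IsDiag) :
    (modelHSI n k lam).E (fun Y => (∏ f ∈ F₁, edgeValSym Y f) * ∏ f ∈ F₂, edgeValSym Y f)
      = (1 / 4) ^ (F₁ ∩ F₂).card *
          (lam ^ (F₁ ∆ F₂).card * ((k : ℝ) / n) ^ (vertsOf (F₁ ∆ F₂)).card) := by
  have hsq : ∀ y : Fin n → Fin n → Bool,
      ∏ f ∈ F₁ ∩ F₂, edgeValSym (obsIdx (1 / 2) y) f ^ 2 = (1 / 4) ^ (F₁ ∩ F₂).card := fun y => by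
    rw [← Finset.prod_const]
    exact Finset.prod_congr rfl fun f hf =>
      edgeValSym_obsIdx_half_sq y (hF₁ f (Finset.mem_inter.mp hf).1)
  have hdiag : ∀ f ∈ F₁ ∆ F₂, ¬ f.IsDiag := fun f hf =>
    (Finset.mem_union.mp (Finset.symmDiff_subset_union hf)).elim (hF₁ f) (hF₂ f)
  rw [(modelHSI n k lam).E_congr (g := fun Y => (1 / 4) ^ (F₁ ∩ F₂).card *
      ∏ f ∈ F₁ ∆ F₂, edgeValSym Y f) fun y => by
      rw [prod_mul_prod_eq_prod_inter_sq_mul_prod_symmDiff, ← hsq y]; rfl,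
    Model.E_const_mul, modelHSI_E_prod_edgeValSym lam hn hkn hdiag]

namespace Graf

variable (G : Graf)

lemma compOf_eq_of_reachable {v w : Fin G.m} (h : G.graph.Reachable v w) :
    G.compOf v = G.compOf w :=
  Finset.filter_congr fun _ _ => ⟨fun h' x hx => h.symm.trans (h' x hx),
    fun h' x hx => h.trans (h' x hx)⟩

lemma mem_compOf {e : Sym2 (Fin G.m)} (he : e ∈ G.Ed) {v : Fin G.m} (hv : v ∈ e) :
    e ∈ G.compOf v := by
  refine Finset.mem_filter.mpr ⟨he, fun w hw => ?_⟩
  by_cases hvw : v = w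
  · exact hvw ▸ SimpleGraph.Reachable.refl v
  · exact SimpleGraph.Adj.reachable ⟨hvw, (Sym2.mem_and_mem_iff hvw).mp ⟨hv, hw⟩ ▸ he⟩

lemma exists_compOf_eq {C : Finset (Sym2 (Fin G.m))} (hC : C ∈ G.comps) :
    ∃ v, G.compOf v = C := by
  obtain ⟨hC, -⟩ := Finset.mem_filter.mp hC
  simpa using hC

lemma subset_Ed_of_mem_comps {C : Finset (Sym2 (Fin G.m))} (hC : C ∈ G.comps) : C ⊆ G.Ed := by
  obtain ⟨v, rfl⟩ := G.exists_compOf_eq hC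
  exact Finset.filter_subset _ _

lemma compOf_eq_of_mem {C : Finset (Sym2 (Fin G.m))} (hC : C ∈ G.comps)
    {e : Sym2 (Fin G.m)} (he : e ∈ C) {v : Fin G.m} (hv : v ∈ e) : G.compOf v = C := by
  obtain ⟨w, rfl⟩ := G.exists_compOf_eq hC
  exact (G.compOf_eq_of_reachable ((Finset.mem_filter.mp he).2 v hv)).symm

lemma compOf_mem_comps {v : Fin G.m} (hv : ∃ e ∈ G.Ed, v ∈ e) : G.compOf v ∈ G.comps := by
  obtain ⟨e, he, hve⟩ := hv
  exact Finset.mem_filter.mpr ⟨Finset.mem_image_of_mem _ (Finset.mem_univ v),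
    e, G.mem_compOf he hve⟩

lemma pairwiseDisjoint_comps : (G.comps : Set (Finset (Sym2 (Fin G.m)))).PairwiseDisjoint id := by
  intro C hC C' hC' hne
  refine Finset.disjoint_left.mpr fun e he he' => hne ?_
  rw [← G.compOf_eq_of_mem hC he e.out_fst_mem, G.compOf_eq_of_mem hC' he' e.out_fst_mem]

lemma biUnion_comps : G.comps.biUnion id = G.Ed := by
  refine subset_antisymm (Finset.biUnion_subset.mpr fun C hC => G.subset_Ed_of_mem_comps hC)
    fun e he => Finset.mem_biUnion.mpr ?_
  exact ⟨_, G.compOf_mem_comps ⟨e, he, e.out_fst_mem⟩, G.mem_compOf he e.out_fst_mem⟩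

lemma card_le_card_filter_compOf_mem {W : Finset (Fin G.m)}
    (hW : ∀ v, ∃ w ∈ W, G.graph.Reachable w v) {S : Finset (Finset (Sym2 (Fin G.m)))}
    (hS : S ⊆ G.comps) : S.card ≤ (W.filter fun w => G.compOf w ∈ S).card := by
  refine Finset.card_le_card_of_surjOn G.compOf fun C hC => ?_
  obtain ⟨v, rfl⟩ := G.exists_compOf_eq (hS hC)
  obtain ⟨w, hw, hwv⟩ := hW v
  rw [← G.compOf_eq_of_reachable hwv] at hC ⊢
  exact ⟨w, by simpa [hw] using hC, rfl⟩

end Graf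

lemma mem_vertsOf {n : ℕ} {F : Finset (Sym2 (Fin n))} {u : Fin n} :
    u ∈ vertsOf F ↔ ∃ f ∈ F, u ∈ f := by
  simp [vertsOf]

lemma vertsOf_mono {n : ℕ} {F F' : Finset (Sym2 (Fin n))} (h : F ⊆ F') :
    vertsOf F ⊆ vertsOf F' := fun u hu => by
  obtain ⟨f, hf, huf⟩ := mem_vertsOf.mp hu
  exact mem_vertsOf.mpr ⟨f, h hf, huf⟩

lemma vertsOf_union {n : ℕ} (F F' : Finset (Sym2 (Fin n))) :
    vertsOf (F ∪ F') = vertsOf F ∪ vertsOf F' := by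
  ext u
  simp only [Finset.mem_union, mem_vertsOf]
  grind

def lEcomps {n : ℕ} (G : Graf) (π : Fin G.m → Fin n) (A : Finset (Finset (Sym2 (Fin G.m)))) :
    Finset (Sym2 (Fin n)) :=
  (A.biUnion id).image (Sym2.map π)

section lEcomps

variable {n : ℕ} (G : Graf) {π : Fin G.m → Fin n} {A B : Finset (Finset (Sym2 (Fin G.m)))}

lemma lEcomps_union (π : Fin G.m → Fin n) :
    lEcomps G π (A ∪ B) = lEcomps G π A ∪ lEcomps G π B := by
  rw [lEcomps, Finset.union_biUnion, Finset.image_union]; rfl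

lemma disjoint_lEcomps (hπ : Function.Injective π) (hA : A ⊆ G.comps) (hB : B ⊆ G.comps)
    (hAB : Disjoint A B) : Disjoint (lEcomps G π A) (lEcomps G π B) := by
  rw [lEcomps, lEcomps, Finset.disjoint_image (Sym2.map.injective hπ),
    Finset.disjoint_biUnion_left]
  refine fun C hC => (Finset.disjoint_biUnion_right _ _ _).mpr fun C' hC' => ?_
  exact G.pairwiseDisjoint_comps (hA hC) (hB hC') fun h =>
    Finset.disjoint_left.mp hAB hC (h ▸ hC')

lemma not_isDiag_of_mem_lEcomps (hπ : Function.Injective π) (hA : A ⊆ G.comps)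
    {f : Sym2 (Fin n)} (hf : f ∈ lEcomps G π A) : ¬ f.IsDiag := by
  obtain ⟨e, he, rfl⟩ := Finset.mem_image.mp hf
  obtain ⟨C, hC, heC⟩ := Finset.mem_biUnion.mp he
  rw [Sym2.isDiag_map hπ]
  exact G.not_diag e (G.subset_Ed_of_mem_comps (hA hC) heC)

lemma mem_vertsOf_lEcomps_iff (hπ : Function.Injective π) (hA : A ⊆ G.comps)
    {v : Fin G.m} (hv : ∃ e ∈ G.Ed, v ∈ e) :
    π v ∈ vertsOf (lEcomps G π A) ↔ G.compOf v ∈ A := by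
  constructor
  · intro h
    obtain ⟨f, hf, hvf⟩ := mem_vertsOf.mp h
    obtain ⟨e, he, rfl⟩ := Finset.mem_image.mp hf
    obtain ⟨C, hC, heC⟩ := Finset.mem_biUnion.mp he
    obtain ⟨w, hwe, hwv⟩ := Sym2.mem_map.mp hvf
    rwa [← hπ hwv, G.compOf_eq_of_mem (hA hC) heC hwe]
  · intro h
    obtain ⟨e, he, hve⟩ := hv
    exact mem_vertsOf.mpr ⟨e.map π, Finset.mem_image_of_mem _
      (Finset.mem_biUnion.mpr ⟨_, h, G.mem_compOf he hve⟩), Sym2.mem_map.mpr ⟨v, hve, rfl⟩⟩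

lemma prod_monoE_eq_prod_lEcomps (hπ : Function.Injective π) (hA : A ⊆ G.comps)
    (Y : Obs n) : ∏ C ∈ A, monoE C π Y = ∏ f ∈ lEcomps G π A, edgeValSym Y f := by
  rw [lEcomps, Finset.prod_image fun a _ b _ h => Sym2.map.injective hπ h,
    Finset.prod_biUnion (G.pairwiseDisjoint_comps.subset hA)]
  rfl

end lEcomps

lemma monoE_eq_prod_comps {n : ℕ} (G : Graf) (π : Fin G.m → Fin n) (Y : Obs n) :
    monoE G.Ed π Y = ∏ C ∈ G.comps, monoE C π Y := by
  rw [monoE, ← G.biUnion_comps, Finset.prod_biUnion G.pairwiseDisjoint_comps]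
  rfl

lemma modelHSI_E_prod_monoE {n k : ℕ} (lam : ℝ) (hn : 0 < n) (hkn : k ≤ n) {G : Graf}
    {π : Fin G.m → Fin n} (hπ : Function.Injective π) {A : Finset (Finset (Sym2 (Fin G.m)))}
    (hA : A ⊆ G.comps) :
    (modelHSI n k lam).E (fun Y => ∏ C ∈ A, monoE C π Y)
      = lam ^ (lEcomps G π A).card * ((k : ℝ) / n) ^ (vertsOf (lEcomps G π A)).card := by
  simp_rw [prod_monoE_eq_prod_lEcomps G hπ hA]
  exact modelHSI_E_prod_edgeValSym lam hn hkn fun f => not_isDiag_of_mem_lEcomps G hπ hA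

lemma modelHSI_E_prod_monoE_mul_prod_monoE {n k : ℕ} (lam : ℝ) (hn : 0 < n) (hkn : k ≤ n)
    {G₁ G₂ : Graf} {π₁ : Fin G₁.m → Fin n} {π₂ : Fin G₂.m → Fin n}
    (hπ₁ : Function.Injective π₁) (hπ₂ : Function.Injective π₂)
    {A₁ : Finset (Finset (Sym2 (Fin G₁.m)))} {A₂ : Finset (Finset (Sym2 (Fin G₂.m)))}
    (hA₁ : A₁ ⊆ G₁.comps) (hA₂ : A₂ ⊆ G₂.comps) :
    (modelHSI n k lam).E (fun Y => (∏ C ∈ A₁, monoE C π₁ Y) * ∏ C ∈ A₂, monoE C π₂ Y)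
      = (1 / 4) ^ (lEcomps G₁ π₁ A₁ ∩ lEcomps G₂ π₂ A₂).card *
          (lam ^ (lEcomps G₁ π₁ A₁ ∆ lEcomps G₂ π₂ A₂).card * ((k : ℝ) / n) ^
            (vertsOf (lEcomps G₁ π₁ A₁ ∆ lEcomps G₂ π₂ A₂)).card) := by
  simp_rw [prod_monoE_eq_prod_lEcomps G₁ hπ₁ hA₁, prod_monoE_eq_prod_lEcomps G₂ hπ₂ hA₂]
  exact modelHSI_E_prod_mul_prod_edgeValSym lam hn hkn
    (fun f => not_isDiag_of_mem_lEcomps G₁ hπ₁ hA₁) fun f => not_isDiag_of_mem_lEcomps G₂ hπ₂ hA₂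

/-- An edge of `H` at `w` outside `T` cannot also be an edge of `G` outside `S`, since it contains
`π v` and `G.compOf v ∈ S`; so it lies in the symmetric difference. -/
lemma mem_vertsOf_of_shared {n : ℕ} {G H : Graf} {π : Fin G.m → Fin n} {σ : Fin H.m → Fin n}
    (hπ : Function.Injective π) (hσ : Function.Injective σ)
    {S : Finset (Finset (Sym2 (Fin G.m)))} {T : Finset (Finset (Sym2 (Fin H.m)))}
    (hS : S ⊆ G.comps) (hT : T ⊆ H.comps) {v : Fin G.m} {w : Fin H.m}
    (hv : ∃ e ∈ G.Ed, v ∈ e) (hw : ∃ e ∈ H.Ed, w ∈ e) (hvw : π v = σ w)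
    (hvS : G.compOf v ∈ S) :
    π v ∈ vertsOf (lEcomps G π S) ∧ (π v ∈ vertsOf (lEcomps H σ T) ∨
      π v ∈ vertsOf (lEcomps G π (G.comps \ S) ∆ lEcomps H σ (H.comps \ T))) := by
  refine ⟨(mem_vertsOf_lEcomps_iff G hπ hS hv).mpr hvS, ?_⟩
  by_cases hwT : H.compOf w ∈ T
  · exact Or.inl (hvw ▸ (mem_vertsOf_lEcomps_iff H hσ hT hw).mpr hwT)
  right
  have hw_rest : σ w ∈ vertsOf (lEcomps H σ (H.comps \ T)) :=
    (mem_vertsOf_lEcomps_iff H hσ Finset.sdiff_subset hw).mpr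
      (Finset.mem_sdiff.mpr ⟨H.compOf_mem_comps hw, hwT⟩)
  have hv_rest : π v ∉ vertsOf (lEcomps G π (G.comps \ S)) := fun h =>
    (Finset.mem_sdiff.mp ((mem_vertsOf_lEcomps_iff G hπ Finset.sdiff_subset hv).mp h)).2 hvS
  obtain ⟨f, hf, hwf⟩ := mem_vertsOf.mp hw_rest
  refine mem_vertsOf.mpr ⟨f, Finset.mem_symmDiff.mpr (Or.inr ⟨hf, fun hf' => ?_⟩), hvw ▸ hwf⟩
  exact hv_rest (mem_vertsOf.mpr ⟨f, hf', hvw ▸ hwf⟩)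

lemma lEcomps_comps_eq_union {n : ℕ} (G : Graf) (π : Fin G.m → Fin n)
    {S : Finset (Finset (Sym2 (Fin G.m)))} (hS : S ⊆ G.comps) :
    lEcomps G π G.comps = lEcomps G π (G.comps \ S) ∪ lEcomps G π S := by
  rw [← lEcomps_union, Finset.sdiff_union_of_subset hS]

/-- Every component of `S` contains a node whose label is shared with `H`; distinct components
give distinct labels. -/
lemma exists_shared_labels {n : ℕ} {G H : Graf} {π : Fin G.m → Fin n} {σ : Fin H.m → Fin n}
    (hG : G.IsTemplate) (hH : H.IsTemplate) (hπ : Function.Injective π)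
    (hσ : Function.Injective σ) {S : Finset (Finset (Sym2 (Fin G.m)))}
    {T : Finset (Finset (Sym2 (Fin H.m)))} (hS : S ⊆ G.comps) (hT : T ⊆ H.comps)
    (hshared : ∀ v, ∃ v', G.graph.Reachable v' v ∧ ∃ w, π v' = σ w) :
    ∃ U : Finset (Fin n), S.card ≤ U.card ∧ ∀ u ∈ U,
      u ∈ vertsOf (lEcomps G π S) ∧ (u ∈ vertsOf (lEcomps H σ T) ∨
        u ∈ vertsOf (lEcomps G π (G.comps \ S) ∆ lEcomps H σ (H.comps \ T))) := by
  refine ⟨(Finset.univ.filter fun v => (∃ w, π v = σ w) ∧ G.compOf v ∈ S).image π, ?_, ?_⟩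
  · rw [Finset.card_image_of_injective _ hπ, ← Finset.filter_filter]
    refine G.card_le_card_filter_compOf_mem (fun v => ?_) hS
    obtain ⟨v', hv'v, hv'⟩ := hshared v
    exact ⟨v', by simpa using hv', hv'v⟩
  · simp only [Finset.mem_image, Finset.mem_filter, Finset.mem_univ, true_and]
    rintro _ ⟨v, ⟨⟨w, hvw⟩, hvS⟩, rfl⟩
    exact mem_vertsOf_of_shared hπ hσ hS hT (hG v) (hH w) hvw hvS

lemma card_add_card_add_two_mul_card_vertsOf_le {n : ℕ} {G₁ G₂ : Graf}
    {Mm : Finset (Fin G₁.m × Fin G₂.m)} {π₁ : Fin G₁.m → Fin n} {π₂ : Fin G₂.m → Fin n}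
    {S₁ : Finset (Finset (Sym2 (Fin G₁.m)))} {S₂ : Finset (Finset (Sym2 (Fin G₂.m)))}
    (hT₁ : G₁.IsTemplate) (hT₂ : G₂.IsTemplate)
    (hM : InMstar G₁ G₂ Mm) (hPi : InPi G₁ G₂ Mm π₁ π₂) (hS₁ : S₁ ⊆ G₁.comps)
    (hS₂ : S₂ ⊆ G₂.comps) :
    S₁.card + S₂.card + 2 * (vertsOf (lEcomps G₁ π₁ G₁.comps ∆ lEcomps G₂ π₂ G₂.comps)).card
      ≤ 2 * ((vertsOf (lEcomps G₁ π₁ (G₁.comps \ S₁) ∆ lEcomps G₂ π₂ (G₂.comps \ S₂))).card +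
        (vertsOf (lEcomps G₁ π₁ S₁)).card + (vertsOf (lEcomps G₂ π₂ S₂)).card) := by
  obtain ⟨hπ₁, hπ₂, hMπ⟩ := hPi
  obtain ⟨T₁, hcard₁, hT₁mem⟩ := exists_shared_labels hT₁ hT₂ hπ₁ hπ₂ hS₁ hS₂ fun v => by
    obtain ⟨p, hp, hpv⟩ := hM.1 v
    exact ⟨p.1, hpv, p.2, (hMπ p.1 p.2).mpr hp⟩
  obtain ⟨T₂, hcard₂, hT₂mem⟩ := exists_shared_labels hT₂ hT₁ hπ₂ hπ₁ hS₂ hS₁ fun w => by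
    obtain ⟨p, hp, hpw⟩ := hM.2 w
    exact ⟨p.2, hpw, p.1, ((hMπ p.1 p.2).mpr hp).symm⟩
  rw [symmDiff_comm] at hT₂mem
  have hD : vertsOf (lEcomps G₁ π₁ G₁.comps ∆ lEcomps G₂ π₂ G₂.comps) ⊆
      vertsOf (lEcomps G₁ π₁ (G₁.comps \ S₁) ∆ lEcomps G₂ π₂ (G₂.comps \ S₂)) ∪
        vertsOf (lEcomps G₁ π₁ S₁) ∪ vertsOf (lEcomps G₂ π₂ S₂) := by
    rw [lEcomps_comps_eq_union G₁ π₁ hS₁, lEcomps_comps_eq_union G₂ π₂ hS₂,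
      ← vertsOf_union, ← vertsOf_union]
    exact vertsOf_mono (symmDiff_union_union_subset _ _ _ _)
  have := card_add_card_add_two_mul_card_le
    (fun u hu => by have := hT₁mem u hu; simp only [Finset.mem_union, Finset.mem_inter]; tauto)
    (fun u hu => by have := hT₂mem u hu; simp only [Finset.mem_union, Finset.mem_inter]; tauto) hD
  omega

/-- component-split moment bounds in (HS-I) with `q = 1/2`. -/
theorem component_split_bound_HSI :
    ∃ c0 : ℝ, 4 ≤ c0 ∧
      ∀ (n D k : ℕ) (lam : ℝ),
        2 ≤ n → 2 ≤ D → 1 ≤ k → k ≤ n → 0 ≤ lam → lam ≤ 1 / 2 →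
        signalHS n k D lam c0 →
        ∀ (G₁ G₂ : Graf), G₁.IsTemplate → G₂.IsTemplate →
          G₁.Ed.card ≤ D → G₂.Ed.card ≤ D →
        ∀ Mm : Finset (Fin G₁.m × Fin G₂.m), IsMatching Mm → InMstar G₁ G₂ Mm →
        ∀ (π₁ : Fin G₁.m → Fin n) (π₂ : Fin G₂.m → Fin n), InPi G₁ G₂ Mm π₁ π₂ →
        ∀ (S₁ : Finset (Finset (Sym2 (Fin G₁.m)))) (S₂ : Finset (Finset (Sym2 (Fin G₂.m)))),
          S₁ ⊆ G₁.comps → S₂ ⊆ G₂.comps →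
          0 ≤ (modelHSI n k lam).E
                (fun Y => (∏ C ∈ G₁.comps \ S₁, monoE C π₁ Y) *
                          (∏ C ∈ G₂.comps \ S₂, monoE C π₂ Y)) *
              (modelHSI n k lam).E (fun Y => ∏ C ∈ S₁, monoE C π₁ Y) *
              (modelHSI n k lam).E (fun Y => ∏ C ∈ S₂, monoE C π₂ Y) ∧
          (modelHSI n k lam).E
                (fun Y => (∏ C ∈ G₁.comps \ S₁, monoE C π₁ Y) *
                          (∏ C ∈ G₂.comps \ S₂, monoE C π₂ Y)) *
              (modelHSI n k lam).E (fun Y => ∏ C ∈ S₁, monoE C π₁ Y) *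
              (modelHSI n k lam).E (fun Y => ∏ C ∈ S₂, monoE C π₂ Y) ≤
            ((k : ℝ) / n) ^ (((S₁.card + S₂.card : ℕ) : ℝ) / 2) *
              (modelHSI n k lam).E (fun Y => monoE G₁.Ed π₁ Y * monoE G₂.Ed π₂ Y) := by
  refine ⟨4, le_rfl, fun n D k lam hn _ hk hkn hlam₀ hlam _ G₁ G₂ hT₁ hT₂ _ _ Mm _ hM π₁ π₂ hPi
    S₁ S₂ hS₁ hS₂ => ?_⟩
  have hπ₁ := hPi.1
  have hπ₂ := hPi.2.1
  have hn₀ : 0 < n := by omega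
  have hr₀ : (0 : ℝ) < k / n := by positivity
  have hr₁ : (k : ℝ) / n ≤ 1 := div_le_one_of_le₀ (by exact_mod_cast hkn) (Nat.cast_nonneg n)
  simp_rw [monoE_eq_prod_comps]
  rw [modelHSI_E_prod_monoE_mul_prod_monoE lam hn₀ hkn hπ₁ hπ₂ Finset.sdiff_subset
      Finset.sdiff_subset, modelHSI_E_prod_monoE lam hn₀ hkn hπ₁ hS₁,
    modelHSI_E_prod_monoE lam hn₀ hkn hπ₂ hS₂,
    modelHSI_E_prod_monoE_mul_prod_monoE lam hn₀ hkn hπ₁ hπ₂ subset_rfl subset_rfl]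
  refine ⟨by positivity, quarter_pow_mul_le hlam₀ hlam hr₀ hr₁ ?_ ?_
    (card_add_card_add_two_mul_card_vertsOf_le hT₁ hT₂ hM hPi hS₁ hS₂)⟩
  · rw [lEcomps_comps_eq_union G₁ π₁ hS₁, lEcomps_comps_eq_union G₂ π₂ hS₂]
    exact Finset.card_le_card
      (Finset.inter_subset_inter Finset.subset_union_left Finset.subset_union_left)
  · rw [lEcomps_comps_eq_union G₁ π₁ hS₁, lEcomps_comps_eq_union G₂ π₂ hS₂]
    exact card_symmDiff_union_union
      (disjoint_lEcomps G₁ hπ₁ Finset.sdiff_subset hS₁ Finset.sdiff_disjoint)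
      (disjoint_lEcomps G₂ hπ₂ Finset.sdiff_subset hS₂ Finset.sdiff_disjoint)

end LDLB
end
end

section
/- Let G^{(1)} = (V^{(1)},E^{(1)}) and G^{(2)} = (V^{(2)},E^{(2)}) be templates. For subsets Ū₁ ⊆ V^{(1)}, Ū₂ ⊆ V^{(2)} and a matching M̲, define the shadow class 𝓜_shadow(Ū₁,Ū₂,M̲) := {M ∈ 𝓜 : U^{(1)}(M) = Ū₁, U^{(2)}(M) = Ū₂, M_SM(M) = M̲}. Then |𝓜_shadow(Ū₁,Ū₂,M̲)| ≤ min(|Aut(G^{(1)})|, |Aut(G^{(2)})|), where Aut(G) denotes the automorphism group of the graph G. -/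
open Finset MeasureTheory
open scoped Classical

noncomputable section

namespace LDLB

/-!
Fix a matching `B` in the shadow class. Any other member `A` of the class covers the same nodes
and agrees with `B` on the semi-matched pairs `Mb`, so following a pair of `A \ Mb` and then the
pair of `B` with the same `G₂`-node defines a permutation of `V₁` (the identity off `A \ Mb`). Since
every pair of `A \ Mb` and of `B \ Mb` is perfectly matched, the edges at such a node are carried
along, so this permutation is an automorphism of `G₁`; and it determines `A`. Hence the class
injects into `Aut(G₁)`, and by exchanging the roles of the two templates also into `Aut(G₂)`.
-/

section Transfer

variable {m₁ m₂ : ℕ} {Mb A B A' : Finset (Fin m₁ × Fin m₂)} {v : Fin m₁} {w : Fin m₂}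

lemma IsMatching.snd_eq (h : IsMatching A) {p p' : Fin m₁ × Fin m₂}
    (hp : p ∈ A) (hp' : p' ∈ A) (h1 : p.1 = p'.1) : p.2 = p'.2 :=
  (h p hp p' hp').1 h1

lemma IsMatching.fst_eq (h : IsMatching A) {p p' : Fin m₁ × Fin m₂}
    (hp : p ∈ A) (hp' : p' ∈ A) (h2 : p.2 = p'.2) : p.1 = p'.1 :=
  (h p hp p' hp').2 h2

structure SameShadow (Mb A B : Finset (Fin m₁ × Fin m₂)) : Prop where
  isMatching_left : IsMatching A
  isMatching_right : IsMatching B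
  subset_left : Mb ⊆ A
  subset_right : Mb ⊆ B
  image_fst : A.image Prod.fst = B.image Prod.fst
  image_snd : A.image Prod.snd = B.image Prod.snd

namespace SameShadow

lemma symm (H : SameShadow Mb A B) : SameShadow Mb B A :=
  ⟨H.isMatching_right, H.isMatching_left, H.subset_right, H.subset_left, H.image_fst.symm,
    H.image_snd.symm⟩

lemma exists_mem_right_snd_eq (H : SameShadow Mb A B) (h : (v, w) ∈ A) :
    ∃ q ∈ B, q.2 = w :=
  mem_image.mp (H.image_snd ▸ mem_image_of_mem Prod.snd h)

lemma exists_mem_sdiff_right (H : SameShadow Mb A B) (h : (v, w) ∈ A \ Mb) :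
    ∃ w', (v, w') ∈ B \ Mb := by
  obtain ⟨hA, hMb⟩ := mem_sdiff.mp h
  obtain ⟨q, hqB, rfl⟩ := mem_image.mp (H.image_fst ▸ mem_image_of_mem Prod.fst hA)
  refine ⟨q.2, mem_sdiff.mpr ⟨hqB, fun hq => hMb ?_⟩⟩
  have hqw : q.2 = w := H.isMatching_left.snd_eq (H.subset_left hq) hA rfl
  rwa [← hqw]

end SameShadow

/-- The `B`-partner of the `A`-partner of `v` if `v` is matched by a pair of `A \ Mb`,
and `v` itself otherwise. -/
def transfer (Mb A B : Finset (Fin m₁ × Fin m₂)) (v : Fin m₁) : Fin m₁ :=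
  if h : ∃ q ∈ B, ∃ p ∈ A \ Mb, p.1 = v ∧ p.2 = q.2 then h.choose.1 else v

lemma transfer_eq_self (h : ∀ w, (v, w) ∉ A \ Mb) : transfer Mb A B v = v :=
  dif_neg fun ⟨_, _, p, hp, hpv, _⟩ => h p.2 (hpv ▸ hp)

lemma transfer_mem_sdiff (H : SameShadow Mb A B) (h : (v, w) ∈ A \ Mb) :
    (transfer Mb A B v, w) ∈ B \ Mb := by
  obtain ⟨hA, hMb⟩ := mem_sdiff.mp h
  obtain ⟨q, hqB, hqw⟩ := H.exists_mem_right_snd_eq hA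
  have hex : ∃ q ∈ B, ∃ p ∈ A \ Mb, p.1 = v ∧ p.2 = q.2 := ⟨q, hqB, _, h, rfl, hqw.symm⟩
  obtain ⟨hq'B, p, hp, hpv, hpq⟩ := hex.choose_spec
  have hpw : p.2 = w := H.isMatching_left.snd_eq (mem_sdiff.mp hp).1 hA hpv
  have hq' : (transfer Mb A B v, w) = hex.choose := by
    rw [transfer, dif_pos hex, ← hpw, hpq]
  rw [hq']
  refine mem_sdiff.mpr ⟨hq'B, fun hq'Mb => hMb ?_⟩
  have hq'v : hex.choose.1 = v :=
    H.isMatching_left.fst_eq (H.subset_left hq'Mb) hA (by rw [← hpq, hpw])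
  rwa [← hq'v, ← hpw, hpq]

lemma transfer_mem (H : SameShadow Mb A B) (h : (v, w) ∈ A) : (transfer Mb A B v, w) ∈ B := by
  by_cases hMb : (v, w) ∈ Mb
  · rw [transfer_eq_self fun w' hw' => (mem_sdiff.mp hw').2 ?_]
    · exact H.subset_right hMb
    · have hw'w : w' = w := H.isMatching_left.snd_eq (mem_sdiff.mp hw').1 h rfl
      rwa [hw'w]
  · exact (mem_sdiff.mp (transfer_mem_sdiff H (mem_sdiff.mpr ⟨h, hMb⟩))).1

lemma transfer_leftInverse (H : SameShadow Mb A B) :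
    Function.LeftInverse (transfer Mb B A) (transfer Mb A B) := by
  intro v
  by_cases hv : ∃ w, (v, w) ∈ A \ Mb
  · obtain ⟨w, hw⟩ := hv
    exact H.isMatching_left.fst_eq
      (mem_sdiff.mp (transfer_mem_sdiff H.symm (transfer_mem_sdiff H hw))).1 (mem_sdiff.mp hw).1 rfl
  · simp only [not_exists] at hv
    have hvB : ∀ w, (v, w) ∉ B \ Mb := fun w hw =>
      (H.symm.exists_mem_sdiff_right hw).elim fun w' hw' => hv w' hw'
    rw [transfer_eq_self hv, transfer_eq_self hvB]

lemma mem_iff_transfer (H : SameShadow Mb A B) (p : Fin m₁ × Fin m₂) :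
    p ∈ A ↔ p ∈ Mb ∨ (transfer Mb A B p.1, p.2) ∈ B \ Mb := by
  refine ⟨fun hp => or_iff_not_imp_left.mpr fun hMb => transfer_mem_sdiff H ?_, ?_⟩
  · exact mem_sdiff.mpr ⟨hp, hMb⟩
  · rintro (hMb | hB)
    · exact H.subset_left hMb
    · have := (mem_sdiff.mp (transfer_mem_sdiff H.symm hB)).1
      rwa [transfer_leftInverse H] at this

lemma eq_of_transfer_eq (H : SameShadow Mb A B) (H' : SameShadow Mb A' B)
    (h : transfer Mb A B = transfer Mb A' B) : A = A' := by
  ext p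
  rw [mem_iff_transfer H, mem_iff_transfer H', h]

def transferPerm (H : SameShadow Mb A B) : Equiv.Perm (Fin m₁) :=
  ⟨transfer Mb A B, transfer Mb B A, transfer_leftInverse H, transfer_leftInverse H.symm⟩

end Transfer

section Automorphism

variable {G₁ G₂ : Graf} {Mb A B : Finset (Fin G₁.m × Fin G₂.m)}

lemma exists_of_matched1_mk {Mm : Finset (Fin G₁.m × Fin G₂.m)} {u v : Fin G₁.m}
    (h : matched1 G₁ G₂ Mm s(u, v)) :
    ∃ pu ∈ Mm, ∃ pv ∈ Mm, pu.1 = u ∧ pv.1 = v ∧ s(pu.2, pv.2) ∈ G₂.Ed := by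
  obtain ⟨p, hp, p', hp', he, hE⟩ := h
  rcases Sym2.eq_iff.mp he with ⟨rfl, rfl⟩ | ⟨rfl, rfl⟩
  · exact ⟨p, hp, p', hp', rfl, rfl, hE⟩
  · exact ⟨p', hp', p, hp, rfl, rfl, Sym2.eq_swap ▸ hE⟩

lemma exists_of_matched2_mk {Mm : Finset (Fin G₁.m × Fin G₂.m)} {u v : Fin G₂.m}
    (h : matched2 G₁ G₂ Mm s(u, v)) :
    ∃ pu ∈ Mm, ∃ pv ∈ Mm, pu.2 = u ∧ pv.2 = v ∧ s(pu.1, pv.1) ∈ G₁.Ed := by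
  obtain ⟨p, hp, p', hp', he, hE⟩ := h
  rcases Sym2.eq_iff.mp he with ⟨rfl, rfl⟩ | ⟨rfl, rfl⟩
  · exact ⟨p, hp, p', hp', rfl, rfl, hE⟩
  · exact ⟨p', hp', p, hp, rfl, rfl, Sym2.eq_swap ▸ hE⟩

/-- The edge `uv` is matched in `A` at the perfect pair `(u, w)`, giving an edge `w v'` of `G₂`,
which is matched in `B` at the perfect pair `(transfer u, w)`. -/
lemma transfer_mk_mem_Ed (H : SameShadow Mb A B)
    (hA : ∀ p ∈ A \ Mb, pairPerfect G₁ G₂ A p) (hB : ∀ p ∈ B \ Mb, pairPerfect G₁ G₂ B p)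
    {u v : Fin G₁.m} {w : Fin G₂.m} (he : s(u, v) ∈ G₁.Ed) (hu : (u, w) ∈ A \ Mb) :
    s(transfer Mb A B u, transfer Mb A B v) ∈ G₁.Ed := by
  obtain ⟨pu, hpu, pv, hpv, hpu1, rfl, hE₂⟩ :=
    exists_of_matched1_mk ((hA _ hu).1 _ he (Sym2.mem_mk_left u v))
  have hpu2 : pu.2 = w := H.isMatching_left.snd_eq hpu (mem_sdiff.mp hu).1 hpu1
  rw [hpu2] at hE₂
  have hσu := transfer_mem_sdiff H hu
  obtain ⟨qu, hqu, qv, hqv, hqu2, hqv2, hE₁⟩ :=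
    exists_of_matched2_mk ((hB _ hσu).2 _ hE₂ (Sym2.mem_mk_left w pv.2))
  have hqu1 : qu.1 = transfer Mb A B u :=
    H.isMatching_right.fst_eq hqu (mem_sdiff.mp hσu).1 hqu2
  have hqv1 : qv.1 = transfer Mb A B pv.1 :=
    H.isMatching_right.fst_eq hqv (transfer_mem H hpv) hqv2
  rwa [← hqu1, ← hqv1]

lemma map_transfer_mem_Ed (H : SameShadow Mb A B)
    (hA : ∀ p ∈ A \ Mb, pairPerfect G₁ G₂ A p) (hB : ∀ p ∈ B \ Mb, pairPerfect G₁ G₂ B p)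
    {e : Sym2 (Fin G₁.m)} (he : e ∈ G₁.Ed) : e.map (transfer Mb A B) ∈ G₁.Ed := by
  induction e using Sym2.ind with
  | _ u v =>
    rw [Sym2.map_mk]
    by_cases hu : ∃ w, (u, w) ∈ A \ Mb
    · obtain ⟨w, hw⟩ := hu
      exact transfer_mk_mem_Ed H hA hB he hw
    by_cases hv : ∃ w, (v, w) ∈ A \ Mb
    · obtain ⟨w, hw⟩ := hv
      rw [Sym2.eq_swap]
      exact transfer_mk_mem_Ed H hA hB (Sym2.eq_swap ▸ he) hw
    simp only [not_exists] at hu hv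
    rwa [transfer_eq_self hu, transfer_eq_self hv]

lemma map_transfer_mem_Ed_iff (H : SameShadow Mb A B)
    (hA : ∀ p ∈ A \ Mb, pairPerfect G₁ G₂ A p) (hB : ∀ p ∈ B \ Mb, pairPerfect G₁ G₂ B p)
    (e : Sym2 (Fin G₁.m)) : e.map (transfer Mb A B) ∈ G₁.Ed ↔ e ∈ G₁.Ed := by
  refine ⟨fun he => ?_, map_transfer_mem_Ed H hA hB⟩
  have := map_transfer_mem_Ed H.symm hB hA he
  rwa [Sym2.map_map, (transfer_leftInverse H).comp_eq_id, Sym2.map_id] at this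

end Automorphism

section ShadowClass

variable {G₁ G₂ : Graf} {U1 : Finset (Fin G₁.m)} {U2 : Finset (Fin G₂.m)}
  {Mb A B : Finset (Fin G₁.m × Fin G₂.m)}

def shadowClass (G₁ G₂ : Graf) (U1 : Finset (Fin G₁.m)) (U2 : Finset (Fin G₂.m))
    (Mb : Finset (Fin G₁.m × Fin G₂.m)) : Finset (Finset (Fin G₁.m × Fin G₂.m)) :=
  univ.filter fun Mm => IsMatching Mm ∧ Uset1 G₁ G₂ Mm = U1 ∧ Uset2 G₁ G₂ Mm = U2 ∧
    Msm G₁ G₂ Mm = Mb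

lemma Uset1_eq_compl_image (Mm : Finset (Fin G₁.m × Fin G₂.m)) :
    Uset1 G₁ G₂ Mm = (Mm.image Prod.fst)ᶜ := by
  ext v
  simp only [Uset1, mem_filter, mem_univ, true_and, mem_compl, mem_image, not_exists, not_and,
    ne_eq]

lemma Uset2_eq_compl_image (Mm : Finset (Fin G₁.m × Fin G₂.m)) :
    Uset2 G₁ G₂ Mm = (Mm.image Prod.snd)ᶜ := by
  ext v
  simp only [Uset2, mem_filter, mem_univ, true_and, mem_compl, mem_image, not_exists, not_and,
    ne_eq]

lemma sameShadow_of_mem_shadowClass (hA : A ∈ shadowClass G₁ G₂ U1 U2 Mb)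
    (hB : B ∈ shadowClass G₁ G₂ U1 U2 Mb) : SameShadow Mb A B := by
  obtain ⟨hAm, hA1, hA2, hAsm⟩ := (mem_filter.mp hA).2
  obtain ⟨hBm, hB1, hB2, hBsm⟩ := (mem_filter.mp hB).2
  refine ⟨hAm, hBm, hAsm ▸ filter_subset _ _, hBsm ▸ filter_subset _ _, ?_, ?_⟩
  · rw [← compl_inj_iff, ← Uset1_eq_compl_image, ← Uset1_eq_compl_image, hA1, hB1]
  · rw [← compl_inj_iff, ← Uset2_eq_compl_image, ← Uset2_eq_compl_image, hA2, hB2]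

lemma pairPerfect_of_mem_shadowClass (hA : A ∈ shadowClass G₁ G₂ U1 U2 Mb) :
    ∀ p ∈ A \ Mb, pairPerfect G₁ G₂ A p := by
  intro p hp
  obtain ⟨hpA, hpMb⟩ := mem_sdiff.mp hp
  rw [← (mem_filter.mp hA).2.2.2.2] at hpMb
  by_contra h
  exact hpMb (mem_filter.mpr ⟨hpA, h⟩)

lemma card_shadowClass_le_autCard_left :
    (shadowClass G₁ G₂ U1 U2 Mb).card ≤ G₁.autCard := by
  rcases (shadowClass G₁ G₂ U1 U2 Mb).eq_empty_or_nonempty with h | ⟨B, hB⟩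
  · simp [h]
  calc (shadowClass G₁ G₂ U1 U2 Mb).card
      ≤ ((univ.filter fun σ : Equiv.Perm (Fin G₁.m) =>
          ∀ e : Sym2 (Fin G₁.m), e.map σ ∈ G₁.Ed ↔ e ∈ G₁.Ed).map
            ⟨(⇑), DFunLike.coe_injective⟩).card := by
        refine card_le_card_of_injOn (fun A => transfer Mb A B) (fun A hA => ?_) ?_
        · have H := sameShadow_of_mem_shadowClass hA hB
          refine mem_map.mpr ⟨transferPerm H, mem_filter.mpr ⟨mem_univ _, ?_⟩, rfl⟩
          exact map_transfer_mem_Ed_iff H (pairPerfect_of_mem_shadowClass hA)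
            (pairPerfect_of_mem_shadowClass hB)
        · intro A hA A' hA' h
          exact eq_of_transfer_eq (sameShadow_of_mem_shadowClass hA hB)
            (sameShadow_of_mem_shadowClass hA' hB) h
    _ = G₁.autCard := card_map _

end ShadowClass

section Swap

variable {G₁ G₂ : Graf} {Mm : Finset (Fin G₁.m × Fin G₂.m)}

def swapMatching {m₁ m₂ : ℕ} (Mm : Finset (Fin m₁ × Fin m₂)) : Finset (Fin m₂ × Fin m₁) :=
  Mm.map (Equiv.prodComm _ _).toEmbedding

lemma mem_swapMatching {m₁ m₂ : ℕ} {Mm : Finset (Fin m₁ × Fin m₂)} {p : Fin m₂ × Fin m₁} :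
    p ∈ swapMatching Mm ↔ p.swap ∈ Mm :=
  mem_map_equiv

lemma exists_mem_swapMatching {m₁ m₂ : ℕ} {Mm : Finset (Fin m₁ × Fin m₂)}
    {P : Fin m₂ × Fin m₁ → Prop} : (∃ p ∈ swapMatching Mm, P p) ↔ ∃ p ∈ Mm, P p.swap :=
  ⟨fun ⟨p, hp, h⟩ => ⟨p.swap, mem_swapMatching.mp hp, h⟩,
    fun ⟨p, hp, h⟩ => ⟨p.swap, mem_swapMatching.mpr hp, h⟩⟩

lemma forall_mem_swapMatching {m₁ m₂ : ℕ} {Mm : Finset (Fin m₁ × Fin m₂)}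
    {P : Fin m₂ × Fin m₁ → Prop} : (∀ p ∈ swapMatching Mm, P p) ↔ ∀ p ∈ Mm, P p.swap :=
  ⟨fun h p hp => h p.swap (mem_swapMatching.mpr hp),
    fun h p hp => h p.swap (mem_swapMatching.mp hp)⟩

lemma swapMatching_injective {m₁ m₂ : ℕ} :
    Function.Injective (swapMatching : Finset (Fin m₁ × Fin m₂) → _) :=
  map_injective _

lemma IsMatching.swapMatching (h : IsMatching Mm) : IsMatching (swapMatching Mm) :=
  fun _ hp _ hp' => (h _ (mem_swapMatching.mp hp) _ (mem_swapMatching.mp hp')).symm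

lemma matched1_swapMatching {e : Sym2 (Fin G₂.m)} :
    matched1 G₂ G₁ (swapMatching Mm) e ↔ matched2 G₁ G₂ Mm e := by
  simp only [matched1, matched2, exists_mem_swapMatching, Prod.fst_swap, Prod.snd_swap]

lemma matched2_swapMatching {e : Sym2 (Fin G₁.m)} :
    matched2 G₂ G₁ (swapMatching Mm) e ↔ matched1 G₁ G₂ Mm e := by
  simp only [matched1, matched2, exists_mem_swapMatching, Prod.fst_swap, Prod.snd_swap]

lemma Msm_swapMatching : Msm G₂ G₁ (swapMatching Mm) = swapMatching (Msm G₁ G₂ Mm) := by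
  ext p
  simp [Msm, pairPerfect, mem_swapMatching, matched1_swapMatching, matched2_swapMatching, and_comm]

lemma Uset1_swapMatching : Uset1 G₂ G₁ (swapMatching Mm) = Uset2 G₁ G₂ Mm := by
  ext v
  simp only [Uset1, Uset2, mem_filter, forall_mem_swapMatching, Prod.fst_swap]

lemma Uset2_swapMatching : Uset2 G₂ G₁ (swapMatching Mm) = Uset1 G₁ G₂ Mm := by
  ext v
  simp only [Uset1, Uset2, mem_filter, forall_mem_swapMatching, Prod.snd_swap]

lemma swapMatching_mem_shadowClass {U1 : Finset (Fin G₁.m)} {U2 : Finset (Fin G₂.m)}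
    {Mb : Finset (Fin G₁.m × Fin G₂.m)} (h : Mm ∈ shadowClass G₁ G₂ U1 U2 Mb) :
    swapMatching Mm ∈ shadowClass G₂ G₁ U2 U1 (swapMatching Mb) := by
  obtain ⟨hm, h1, h2, hsm⟩ := (mem_filter.mp h).2
  exact mem_filter.mpr ⟨mem_univ _, hm.swapMatching, Uset1_swapMatching.trans h2,
    Uset2_swapMatching.trans h1, Msm_swapMatching.trans (congrArg _ hsm)⟩

lemma card_shadowClass_le_autCard_right {U1 : Finset (Fin G₁.m)} {U2 : Finset (Fin G₂.m)}
    {Mb : Finset (Fin G₁.m × Fin G₂.m)} :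
    (shadowClass G₁ G₂ U1 U2 Mb).card ≤ G₂.autCard :=
  (card_le_card_of_injOn swapMatching (fun _ h => swapMatching_mem_shadowClass h)
    swapMatching_injective.injOn).trans card_shadowClass_le_autCard_left

end Swap

theorem shadow_count_le_aut_general (G₁ G₂ : Graf)
    (U1 : Finset (Fin G₁.m)) (U2 : Finset (Fin G₂.m))
    (Mb : Finset (Fin G₁.m × Fin G₂.m)) :
    ((Finset.univ : Finset (Finset (Fin G₁.m × Fin G₂.m))).filter
        (fun Mm => IsMatching Mm ∧ Uset1 G₁ G₂ Mm = U1 ∧ Uset2 G₁ G₂ Mm = U2 ∧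
          Msm G₁ G₂ Mm = Mb)).card ≤
      min G₁.autCard G₂.autCard :=
  le_min card_shadowClass_le_autCard_left card_shadowClass_le_autCard_right

/-- the number of matchings with a prescribed shadow is at most the minimum of
the two automorphism group sizes. -/
theorem shadow_count_le_aut (G₁ G₂ : Graf) (h₁ : G₁.IsTemplate) (h₂ : G₂.IsTemplate)
    (U1 : Finset (Fin G₁.m)) (U2 : Finset (Fin G₂.m))
    (Mb : Finset (Fin G₁.m × Fin G₂.m)) (hMb : IsMatching Mb) :
    ((Finset.univ : Finset (Finset (Fin G₁.m × Fin G₂.m))).filter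
        (fun Mm => IsMatching Mm ∧ Uset1 G₁ G₂ Mm = U1 ∧ Uset2 G₁ G₂ Mm = U2 ∧
          Msm G₁ G₂ Mm = Mb)).card ≤
      min G₁.autCard G₂.autCard :=
  shadow_count_le_aut_general G₁ G₂ U1 U2 Mb

end LDLB
end
end
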